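/- arXiv:1911.11196 — 2 statements merged into one kernel-verified Lean document; each statement's English description precedes it below -/
import Mathlib

section
/- Let p be prime and e ≥ 1, f ≥ 1 integers. Consider the free abelian group Z[Σ] on a set Σ = {σ_{τ,i} : τ ∈ Z/fZ, 1 ≤ i ≤ e}, and define for each (τ, i) with 2 ≤ i ≤ e the vector w_{τ,i} = σ_{τ,i−1} − σ_{τ,i}, and for i = 1 the vector w_{τ,1} = p·σ_{τ−1,e} − σ_{τ,1}. Define the minimal cone C^min ⊆ Q[Σ] as the set of Σ k_{τ,i}σ_{τ,i} with k_{τ,i+1} ≥ k_{τ,i} for 1 ≤ i < e and p·k_{τ,1} ≥ k_{τ−1,e} for all τ. Then: if k ∈ C^min ∩ Z[Σ], k_{σ} ≥ 0 for all σ, and if k_{τ₀,i₀} = 0 for some (τ₀,i₀), then k_σ = 0 for all σ. -/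
/-!
The first column `c τ := k τ 1` satisfies `c (τ - 1) ≤ k (τ - 1) e ≤ p * c τ`. Going once around
the cycle `ℤ/f` gives `c τ ≤ p ^ f * c τ` with `p ^ f > 1`, so `c τ ≥ 0`, and then every
row is non-negative by monotonicity. If some entry vanishes, so does the first entry of its row,
and the same chain bounds every `c σ` between `0` and `p ^ n * 0`; finally each row is squeezed
between `c τ = 0` and `k τ e ≤ p * c (τ + 1) = 0`.
-/

section CyclicChain

variable {G R : Type*} [AddGroup G] {c : G → R} {g : G} {a : R}

theorem apply_sub_nsmul_le_pow_mul [Semiring R] [PartialOrder R] [IsOrderedRing R]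
    (hc : ∀ τ, c (τ - g) ≤ a * c τ) (ha : 0 ≤ a) (τ : G) (n : ℕ) :
    c (τ - n • g) ≤ a ^ n * c τ := by
  induction n with
  | zero => simp
  | succ n ih =>
    calc c (τ - (n + 1) • g) = c (τ - n • g - g) := by rw [succ_nsmul', sub_add_eq_sub_sub_swap]
      _ ≤ a * c (τ - n • g) := hc _
      _ ≤ a * (a ^ n * c τ) := mul_le_mul_of_nonneg_left ih ha
      _ = a ^ (n + 1) * c τ := by rw [pow_succ', mul_assoc]

theorem nonneg_of_le_mul_of_nsmul_eq_zero [Ring R] [LinearOrder R] [IsStrictOrderedRing R]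
    {n : ℕ} (hc : ∀ τ, c (τ - g) ≤ a * c τ) (ha : 0 ≤ a) (hn : n • g = 0) (han : 1 < a ^ n)
    (τ : G) : 0 ≤ c τ := by
  have hcycle : c τ ≤ a ^ n * c τ := by
    simpa [hn] using apply_sub_nsmul_le_pow_mul hc ha τ n
  refine nonneg_of_mul_nonneg_right (a := a ^ n - 1) ?_ (sub_pos.mpr han)
  rw [sub_mul, one_mul]
  exact sub_nonneg.mpr hcycle

theorem apply_sub_nsmul_eq_zero [Semiring R] [PartialOrder R] [IsOrderedRing R]
    (hc : ∀ τ, c (τ - g) ≤ a * c τ) (ha : 0 ≤ a) (hc₀ : ∀ τ, 0 ≤ c τ) {τ : G} (hτ : c τ = 0)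
    (n : ℕ) : c (τ - n • g) = 0 :=
  le_antisymm (by simpa [hτ] using apply_sub_nsmul_le_pow_mul hc ha τ n) (hc₀ _)

end CyclicChain

theorem ZMod.nonneg_of_apply_sub_one_le_mul {R : Type*} [Ring R] [LinearOrder R]
    [IsStrictOrderedRing R] {f : ℕ} [NeZero f] {c : ZMod f → R} {a : R}
    (hc : ∀ τ, c (τ - 1) ≤ a * c τ) (ha : 1 < a) (τ : ZMod f) : 0 ≤ c τ :=
  nonneg_of_le_mul_of_nsmul_eq_zero hc (zero_le_one.trans ha.le) (by simp)
    (one_lt_pow₀ ha (NeZero.ne f)) τ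

theorem ZMod.eq_zero_of_apply_sub_one_le_mul {R : Type*} [Semiring R] [PartialOrder R]
    [IsOrderedRing R] {f : ℕ} [NeZero f] {c : ZMod f → R} {a : R}
    (hc : ∀ τ, c (τ - 1) ≤ a * c τ) (ha : 0 ≤ a) (hc₀ : ∀ τ, 0 ≤ c τ) {τ₀ : ZMod f}
    (hτ₀ : c τ₀ = 0) (τ : ZMod f) : c τ = 0 := by
  obtain ⟨n, hn⟩ := ZMod.natCast_zmod_surjective (τ₀ - τ)
  have hτ : τ = τ₀ - n • 1 := by rw [nsmul_one, hn, sub_sub_cancel]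
  rw [hτ]
  exact apply_sub_nsmul_eq_zero hc ha hc₀ hτ₀ n

theorem monotoneOn_Icc_of_le_succ {α : Type*} [Preorder α] {u : ℕ → α} {m e : ℕ}
    (hu : ∀ i, m ≤ i → i < e → u i ≤ u (i + 1)) : MonotoneOn u (Set.Icc m e) :=
  monotoneOn_of_le_succ Set.ordConnected_Icc fun i _ hi hi' ↦ by
    rw [Order.succ_eq_add_one] at hi' ⊢
    exact hu i hi.1 (Nat.lt_of_succ_le hi'.2)

/-- Diamond–Kassaei minimal cone (one cyclic block of size `f`, `e` columns):
if `k ∈ C^min ∩ ℤ[Σ]`, i.e. `k (τ, i+1) ≥ k (τ, i)` for `1 ≤ i < e` and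
`p·k (τ, 1) ≥ k (τ−1, e)`, then all components are `≥ 0`, and if one
component vanishes then all vanish. -/
theorem stmt10 (p : ℕ) (hp : p.Prime) (e f : ℕ) (he : 1 ≤ e) (hf : 1 ≤ f)
    (k : ZMod f → ℕ → ℤ)
    (h1 : ∀ τ : ZMod f, ∀ i : ℕ, 1 ≤ i → i < e → k τ i ≤ k τ (i + 1))
    (h2 : ∀ τ : ZMod f, k (τ - 1) e ≤ (p : ℤ) * k τ 1) :
    (∀ τ : ZMod f, ∀ i : ℕ, 1 ≤ i → i ≤ e → 0 ≤ k τ i) ∧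
    (∀ τ₀ : ZMod f, ∀ i₀ : ℕ, 1 ≤ i₀ → i₀ ≤ e → k τ₀ i₀ = 0 →
      ∀ τ : ZMod f, ∀ i : ℕ, 1 ≤ i → i ≤ e → k τ i = 0) := by
  have : NeZero f := ⟨by omega⟩
  have row_mono (τ : ZMod f) {i j : ℕ} (hi : 1 ≤ i) (hij : i ≤ j) (hj : j ≤ e) :
      k τ i ≤ k τ j :=
    monotoneOn_Icc_of_le_succ (h1 τ) ⟨hi, hij.trans hj⟩ ⟨hi.trans hij, hj⟩ hij
  have chain (τ : ZMod f) : k (τ - 1) 1 ≤ (p : ℤ) * k τ 1 :=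
    (row_mono _ le_rfl he le_rfl).trans (h2 τ)
  have first_nonneg (τ : ZMod f) : 0 ≤ k τ 1 :=
    ZMod.nonneg_of_apply_sub_one_le_mul chain (mod_cast hp.one_lt : (1 : ℤ) < p) τ
  have nonneg (τ : ZMod f) (i : ℕ) (hi : 1 ≤ i) (hie : i ≤ e) : 0 ≤ k τ i :=
    (first_nonneg τ).trans (row_mono τ le_rfl hi hie)
  refine ⟨nonneg, fun τ₀ i₀ hi₀ hi₀e hk₀ τ i hi hie ↦ ?_⟩
  have first_zero : ∀ σ, k σ 1 = 0 :=
    ZMod.eq_zero_of_apply_sub_one_le_mul chain (by positivity) first_nonneg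
      (le_antisymm (hk₀ ▸ row_mono τ₀ le_rfl hi₀ hi₀e) (first_nonneg τ₀))
  have last_nonpos : k τ e ≤ 0 := by
    simpa [first_zero] using h2 (τ + 1)
  exact le_antisymm ((row_mono τ hi hie le_rfl).trans last_nonpos) (nonneg τ i hi hie)
end

section
/- Let p be prime, e, f ≥ 1. With notation as in the minimal cone setup, suppose the weight vector k = Σ_{τ,i} σ_{τ,i} (all components equal to 1) equals Σ_{τ,i} n_{τ,i} w_{τ,i} with all n_{τ,i} ∈ Z_{≥0}, where w_{τ,i} are the Hasse invariant weight vectors (w_{τ,i} = σ_{τ,i−1} − σ_{τ,i} for i ≥ 2 and w_{τ,1} = p·σ_{τ−1,e} − σ_{τ,1}). Then (p−1)·Σ_τ n_{τ,1} = e·f, so (p−1) divides e·f; moreover n_{τ,i} = i−1+e/(p−1) for all τ, i, so in fact (p−1) divides e. -/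
set_option maxHeartbeats 1000000 in
private theorem stmt11_key (p e f : ℕ) (he : 1 ≤ e) [NeZero f]
    (n : ZMod f → Fin e → ℕ)
    (w : ZMod f → Fin e → (ZMod f × Fin e → ℤ))
    (hw : ∀ (τ : ZMod f) (i : Fin e), w τ i = fun x =>
      (if (i : ℕ) = 0 then
        (if x = (τ - 1, (⟨e - 1, by omega⟩ : Fin e)) then (p : ℤ) else 0)
      else
        (if x = (τ, (⟨(i : ℕ) - 1, by have := i.isLt; omega⟩ : Fin e)) then 1 else 0))
      - (if x = (τ, i) then 1 else 0))
    (h1 : ∀ x : ZMod f × Fin e,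
      (∑ y : ZMod f × Fin e, (n y.1 y.2 : ℤ) * w y.1 y.2 x) = 1)
    (τ0 : ZMod f) (i0 : Fin e) :
      (if h : (i0 : ℕ) + 1 < e then (n τ0 ⟨(i0 : ℕ) + 1, h⟩ : ℤ)
       else (p : ℤ) * n (τ0 + 1) ⟨0, by omega⟩) = n τ0 i0 + 1 := by
  have h := h1 (τ0, i0)
  simp only [hw, mul_sub] at h
  rw [Finset.sum_sub_distrib] at h
  simp only [mul_ite, mul_one, mul_zero, Prod.mk.eta, Finset.sum_ite_eq,
    Finset.mem_univ, if_true] at h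
  by_cases hcase : (i0 : ℕ) + 1 < e
  · rw [dif_pos hcase]
    rw [Finset.sum_eq_single (τ0, (⟨(i0 : ℕ) + 1, hcase⟩ : Fin e)) ?_ ?_] at h
    · simp only [Prod.mk.injEq, Fin.ext_iff, Nat.add_sub_cancel] at h
      norm_num at h
      linarith
    · rintro ⟨τ, i⟩ - hne
      dsimp only
      by_cases hi : (i : ℕ) = 0
      · rw [if_pos hi, if_neg ?_]
        intro hcon
        simp only [Prod.mk.injEq, Fin.ext_iff] at hcon
        obtain ⟨-, hB⟩ := hcon
        omega
      · rw [if_neg hi, if_neg ?_]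
        intro hcon
        simp only [Prod.mk.injEq, Fin.ext_iff] at hcon
        obtain ⟨hA, hB⟩ := hcon
        refine hne ?_
        rw [Prod.mk.injEq]
        exact ⟨hA.symm, Fin.ext (show (i : ℕ) = (i0 : ℕ) + 1 by omega)⟩
    · simp
  · rw [dif_neg hcase]
    have hi0 : (i0 : ℕ) = e - 1 := by have := i0.isLt; omega
    rw [Finset.sum_eq_single (τ0 + 1, (⟨0, by omega⟩ : Fin e)) ?_ ?_] at h
    · simp only [Prod.mk.injEq, Fin.ext_iff, add_sub_cancel_right, hi0] at h
      norm_num at h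
      linarith
    · rintro ⟨τ, i⟩ - hne
      dsimp only
      by_cases hi : (i : ℕ) = 0
      · rw [if_pos hi, if_neg ?_]
        intro hcon
        simp only [Prod.mk.injEq, Fin.ext_iff] at hcon
        obtain ⟨hA, -⟩ := hcon
        refine hne ?_
        rw [Prod.mk.injEq]
        refine ⟨by rw [hA]; ring, Fin.ext (show (i : ℕ) = 0 from hi)⟩
      · rw [if_neg hi, if_neg ?_]
        intro hcon
        simp only [Prod.mk.injEq, Fin.ext_iff] at hcon
        obtain ⟨-, hB⟩ := hcon
        have := i.isLt
        omega
    · simp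


/-- Full linear-algebra computation in Cor 2.6: if the all-ones weight vector
in `ℤ[Σ]` (coordinates indexed by `ZMod f × Fin e`) is a non-negative integer
combination `Σ n_{τ,i} w_{τ,i}` of the generalised Hasse invariant weights
`w_{τ,i} = σ_{τ,i−1} − σ_{τ,i}` (`i ≥ 2`) and `w_{τ,1} = p·σ_{τ−1,e} − σ_{τ,1}`,
then `(p−1)·Σ_τ n_{τ,1} = e·f`, `(p−1) ∣ e` and `n_{τ,i} = (i−1) + e/(p−1)`
(with `Fin e` zero-indexed). -/
theorem stmt11 (p e f : ℕ) (hp : p.Prime) (he : 1 ≤ e) (hf : 1 ≤ f) [NeZero f]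
    (n : ZMod f → Fin e → ℕ)
    (w : ZMod f → Fin e → (ZMod f × Fin e → ℤ))
    (hw : ∀ (τ : ZMod f) (i : Fin e), w τ i = fun x =>
      (if (i : ℕ) = 0 then
        (if x = (τ - 1, (⟨e - 1, by omega⟩ : Fin e)) then (p : ℤ) else 0)
      else
        (if x = (τ, (⟨(i : ℕ) - 1, by have := i.isLt; omega⟩ : Fin e)) then 1 else 0))
      - (if x = (τ, i) then 1 else 0))
    (heq : (fun _ : ZMod f × Fin e => (1 : ℤ)) =
      ∑ τ : ZMod f, ∑ i : Fin e, (n τ i : ℤ) • w τ i) :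
    ((p - 1) ∣ e) ∧
    (((p : ℤ) - 1) * ∑ τ : ZMod f, (n τ (⟨0, by omega⟩ : Fin e) : ℤ) = (e : ℤ) * (f : ℤ)) ∧
    (∀ (τ : ZMod f) (i : Fin e), n τ i = (i : ℕ) + e / (p - 1)) := by
  have hp2 := hp.two_le
  have h1 : ∀ x : ZMod f × Fin e,
      (∑ y : ZMod f × Fin e, (n y.1 y.2 : ℤ) * w y.1 y.2 x) = 1 := by
    intro x
    have h := congrFun heq x
    rw [Fintype.sum_prod_type]
    simp only [Finset.sum_apply, Pi.smul_apply, smul_eq_mul] at h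
    exact h.symm
  have key := stmt11_key p e f he n w hw h1
  have h0e : (0 : ℕ) < e := he
  -- step: n τ ⟨j⟩ = n τ ⟨0⟩ + j
  have step : ∀ (τ : ZMod f) (j : ℕ) (hj : j < e),
      (n τ ⟨j, hj⟩ : ℤ) = n τ ⟨0, h0e⟩ + j := by
    intro τ j
    induction j with
    | zero => intro hj; simp
    | succ j ih =>
      intro hj
      have hk := key τ ⟨j, by omega⟩
      rw [dif_pos (show j + 1 < e from hj)] at hk
      rw [hk, ih (by omega)]
      push_cast; ring
  have hlt : e - 1 < e := by omega
  have cyc : ∀ τ : ZMod f, (p : ℤ) * n (τ + 1) ⟨0, h0e⟩ = n τ ⟨0, h0e⟩ + e := by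
    intro τ
    have hk := key τ ⟨e - 1, hlt⟩
    rw [dif_neg (show ¬(e - 1 + 1 < e) by omega)] at hk
    have hs := step τ (e - 1) hlt
    rw [hs] at hk
    rw [hk]
    have : ((e - 1 : ℕ) : ℤ) = (e : ℤ) - 1 := by omega
    rw [this]; ring
  have iter : ∀ (τ : ZMod f) (k : ℕ),
      (p : ℤ) ^ k * n (τ + (k : ZMod f)) ⟨0, h0e⟩ =
        n τ ⟨0, h0e⟩ + (e : ℤ) * ∑ j ∈ Finset.range k, (p : ℤ) ^ j := by
    intro τ k
    induction k with
    | zero => simp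
    | succ k ih =>
      have hc := cyc (τ + (k : ZMod f))
      have hcast : ((k + 1 : ℕ) : ZMod f) = (k : ZMod f) + 1 := by push_cast; ring
      rw [hcast, ← add_assoc, pow_succ, mul_assoc, hc, Finset.sum_range_succ, mul_add,
        mul_add, ih]
      ring
  have hmain : ∀ τ : ZMod f, ((p : ℤ) - 1) * n τ ⟨0, h0e⟩ = e := by
    intro τ
    have hI := iter τ f
    rw [ZMod.natCast_self, add_zero] at hI
    have hGpos : 0 < ∑ j ∈ Finset.range f, (p : ℤ) ^ j := by
      apply Finset.sum_pos
      · intro j _; positivity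
      · exact Finset.nonempty_range_iff.mpr (by omega)
    have hgeom : (∑ j ∈ Finset.range f, (p : ℤ) ^ j) * ((p : ℤ) - 1) = (p : ℤ) ^ f - 1 :=
      geom_sum_mul (p : ℤ) f
    have hzero : (((p : ℤ) - 1) * n τ ⟨0, h0e⟩ - e) * (∑ j ∈ Finset.range f, (p : ℤ) ^ j) = 0 := by
      nlinarith [hI, hgeom]
    rcases mul_eq_zero.mp hzero with h | h
    · linarith
    · exact absurd h hGpos.ne'
  have hmainN : ∀ τ : ZMod f, (p - 1) * n τ ⟨0, h0e⟩ = e := by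
    intro τ
    have h := hmain τ
    have hc : (((p - 1 : ℕ)) : ℤ) = (p : ℤ) - 1 := by omega
    rw [← hc] at h
    exact_mod_cast h
  refine ⟨⟨n 0 ⟨0, h0e⟩, (hmainN 0).symm⟩, ?_, ?_⟩
  · rw [Finset.mul_sum]
    rw [Finset.sum_congr rfl (fun τ _ => hmain τ), Finset.sum_const, Finset.card_univ,
      ZMod.card f]
    push_cast; ring
  · intro τ i
    have hdiv : e / (p - 1) = n τ ⟨0, h0e⟩ :=
      Nat.div_eq_of_eq_mul_left (by omega) (by rw [mul_comm]; exact (hmainN τ).symm)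
    rw [hdiv]
    have hs := step τ (i : ℕ) i.isLt
    rw [Fin.eta] at hs
    have hsN : n τ i = n τ ⟨0, h0e⟩ + (i : ℕ) := by exact_mod_cast hs
    omega
end
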